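/- Let U, V, W be finite-dimensional real inner product spaces and let ∂₂ : W → V and ∂₁ : V → U be linear maps with ∂₁ ∘ ∂₂ = 0, and set Δ = ∂₂ ∘ ∂₂* + ∂₁* ∘ ∂₁. Then the restriction to ker Δ of the quotient map ker ∂₁ → ker ∂₁ / range ∂₂ is a linear isomorphism; in particular ker Δ is isomorphic as a real vector space to the homology ker ∂₁ / range ∂₂ (the discrete Hodge theorem). -/

import Mathlib

/-!
Expanding `⟪Δx, x⟫ = ‖∂₂* x‖² + ‖∂₁ x‖²` shows
`ker Δ = ker ∂₁ ∩ ker ∂₂* = ker ∂₁ ∩ (range ∂₂)ᗮ`. Since `range ∂₂ ⊆ ker ∂₁`, the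
orthogonal decomposition `V = range ∂₂ ⊕ (range ∂₂)ᗮ` restricts to
`ker ∂₁ = range ∂₂ ⊕ ker Δ`, so `ker Δ` is a complement of `range ∂₂` in `ker ∂₁`
and maps isomorphically onto the quotient.
-/

open LinearMap

namespace Submodule

variable {𝕜 E : Type*} [RCLike 𝕜] [NormedAddCommGroup E] [InnerProductSpace 𝕜 E]

theorem bijective_mkQ_comp_inclusion_of_eq_inf_orthogonal {H K R : Submodule 𝕜 E}
    [R.HasOrthogonalProjection] (hRK : R ≤ K) (hH : H = K ⊓ Rᗮ) (hHK : H ≤ K) :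
    Function.Bijective ((R.comap K.subtype).mkQ ∘ₗ inclusion hHK) := by
  subst hH
  constructor
  · intro x y hxy
    have hR : (inclusion hHK x - inclusion hHK y : K) ∈ R.comap K.subtype :=
      (Quotient.eq _).mp hxy
    have hRperp : (x : E) - y ∈ Rᗮ := sub_mem x.2.2 y.2.2
    exact Subtype.ext (sub_eq_zero.mp (R.inf_orthogonal_eq_bot.le ⟨hR, hRperp⟩))
  · intro q
    obtain ⟨⟨y, hyK⟩, rfl⟩ := mkQ_surjective _ q
    obtain ⟨p, hpR, z, hzR, rfl⟩ := R.exists_add_mem_mem_orthogonal y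
    have hzK : z ∈ K := by simpa using K.sub_mem hyK (hRK hpR)
    refine ⟨⟨z, hzK, hzR⟩, (Quotient.eq _).mpr ?_⟩
    simpa using R.neg_mem hpR

end Submodule

namespace LinearMap

variable {𝕜 E F G : Type*} [RCLike 𝕜]
  [NormedAddCommGroup E] [InnerProductSpace 𝕜 E] [FiniteDimensional 𝕜 E]
  [NormedAddCommGroup F] [InnerProductSpace 𝕜 F] [FiniteDimensional 𝕜 F]
  [NormedAddCommGroup G] [InnerProductSpace 𝕜 G] [FiniteDimensional 𝕜 G]

theorem re_inner_comp_adjoint_add_adjoint_comp_apply_self (A : F →ₗ[𝕜] E) (B : E →ₗ[𝕜] G)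
    (x : E) :
    RCLike.re (inner 𝕜 ((A ∘ₗ A.adjoint + B.adjoint ∘ₗ B) x) x) =
      ‖A.adjoint x‖ ^ 2 + ‖B x‖ ^ 2 := by
  rw [add_apply, inner_add_left, comp_apply, comp_apply, ← adjoint_inner_right A,
    adjoint_inner_left B, map_add, inner_self_eq_norm_sq, inner_self_eq_norm_sq]

theorem ker_comp_adjoint_add_adjoint_comp (A : F →ₗ[𝕜] E) (B : E →ₗ[𝕜] G) :
    ker (A ∘ₗ A.adjoint + B.adjoint ∘ₗ B) = ker A.adjoint ⊓ ker B := by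
  ext x
  simp only [Submodule.mem_inf, mem_ker]
  constructor
  · intro hx
    have hsum := re_inner_comp_adjoint_add_adjoint_comp_apply_self A B x
    rw [hx, inner_zero_left, map_zero] at hsum
    obtain ⟨hA, hB⟩ := (add_eq_zero_iff_of_nonneg (sq_nonneg _) (sq_nonneg _)).mp hsum.symm
    exact ⟨by simpa using hA, by simpa using hB⟩
  · rintro ⟨hA, hB⟩
    simp [hA, hB]

end LinearMap

/-- **discrete Hodge theorem.** For linear maps `∂₂ : W → V`,
`∂₁ : V → U` between finite-dimensional real inner product spaces with `∂₁ ∘ ∂₂ = 0`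
and `Δ = ∂₂∂₂* + ∂₁*∂₁`: the restriction to `ker Δ` of the quotient map
`ker ∂₁ → ker ∂₁ / range ∂₂` is a linear isomorphism; in particular `ker Δ` is
isomorphic to the homology `ker ∂₁ / range ∂₂`. -/
theorem stmt19 {U V W : Type*}
    [NormedAddCommGroup U] [InnerProductSpace ℝ U] [FiniteDimensional ℝ U]
    [NormedAddCommGroup V] [InnerProductSpace ℝ V] [FiniteDimensional ℝ V]
    [NormedAddCommGroup W] [InnerProductSpace ℝ W] [FiniteDimensional ℝ W]
    (d2 : W →ₗ[ℝ] V) (d1 : V →ₗ[ℝ] U) (h : d1 ∘ₗ d2 = 0) :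
    (∃ hle : LinearMap.ker (d2 ∘ₗ LinearMap.adjoint d2 + LinearMap.adjoint d1 ∘ₗ d1) ≤
        LinearMap.ker d1,
      Function.Bijective
        ((Submodule.comap (LinearMap.ker d1).subtype (LinearMap.range d2)).mkQ.comp
          (Submodule.inclusion hle))) ∧
      Nonempty
        (↥(LinearMap.ker (d2 ∘ₗ LinearMap.adjoint d2 + LinearMap.adjoint d1 ∘ₗ d1)) ≃ₗ[ℝ]
          (↥(LinearMap.ker d1) ⧸
            Submodule.comap (LinearMap.ker d1).subtype (LinearMap.range d2))) := by
  have hRK : range d2 ≤ ker d1 := range_le_ker_iff.mpr h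
  have hΔ : ker (d2 ∘ₗ d2.adjoint + d1.adjoint ∘ₗ d1) = ker d1 ⊓ (range d2)ᗮ := by
    rw [ker_comp_adjoint_add_adjoint_comp, ← orthogonal_range, inf_comm]
  have hle : ker (d2 ∘ₗ d2.adjoint + d1.adjoint ∘ₗ d1) ≤ ker d1 := hΔ ▸ inf_le_left
  have hbij := Submodule.bijective_mkQ_comp_inclusion_of_eq_inf_orthogonal hRK hΔ hle
  exact ⟨⟨hle, hbij⟩, ⟨.ofBijective _ hbij⟩⟩
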